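/- arXiv:0804.3639 — 2 statements merged into one kernel-verified Lean document; each statement's English description precedes it below -/
import Mathlib

section
/- Fix positive integers d and n. Let b(t) = ∑_{i=0}^{d+1} b_i t^i be a polynomial with integer coefficients of degree at most d+1 satisfying b(t) = t^{d+1} b(1/t), i.e. b_i = b_{d+1−i} for 0 ≤ i ≤ d+1. Then the polynomial b̃(t) := E_n( b(t) · (1 + t + ⋯ + t^{n−1})^{d+1} ) has degree at most d+1 and satisfies b̃(t) = t^{d+1} b̃(1/t), i.e. its coefficients satisfy b̃_i = b̃_{d+1−i} for 0 ≤ i ≤ d+1. -/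
/-!
Symmetry `b(t) = t^{d+1} b(1/t)` says `reflect (d + 1) b = b`. The polynomial
`1 + t + ⋯ + t^{n-1}` is palindromic of degree `n - 1`, and reflection is multiplicative, so
`p = b · (1 + ⋯ + t^{n-1})^{d+1}` is palindromic of degree `(d + 1) + (n - 1)(d + 1) = n(d + 1)`.
Since `(E_n p)_i = p_{n i}` and `n(d + 1) - n i = n(d + 1 - i)`, the operator `E_n` maps
palindromes of degree `n m` to palindromes of degree `m`.
-/

open Polynomial

/-- The polynomial `1 + t + ⋯ + t^{n-1}`. -/
noncomputable def geomPoly (n : ℕ) : Polynomial ℤ :=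
  ∑ j ∈ Finset.range n, X ^ j

/-- The operator `E_n`: discards terms whose exponent is not divisible by `n` and divides
each remaining exponent by `n`, i.e. `(E_n p).coeff k = p.coeff (n * k)`. -/
noncomputable def Eop (n : ℕ) (p : Polynomial ℤ) : Polynomial ℤ :=
  ∑ k ∈ Finset.range (p.natDegree + 1), C (p.coeff (n * k)) * X ^ k

namespace Polynomial

section Reflect

variable {R : Type*} [Semiring R]

theorem reflect_eq_self_iff {N : ℕ} {p : R[X]} :
    reflect N p = p ↔ ∀ i ≤ N, p.coeff i = p.coeff (N - i) := by
  constructor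
  · intro h i hi
    conv_lhs => rw [← h]
    rw [coeff_reflect, revAt_le hi]
  · intro h
    ext i
    rw [coeff_reflect]
    by_cases hi : i ≤ N
    · rw [revAt_le hi, h i hi]
    · rw [revAt_eq_self_of_lt (not_le.mp hi)]

theorem reflect_mul_eq_self {M N : ℕ} {p q : R[X]} (hp : p.natDegree ≤ M)
    (hq : q.natDegree ≤ N) (hpM : reflect M p = p) (hqN : reflect N q = q) :
    reflect (M + N) (p * q) = p * q := by
  rw [reflect_mul p q hp hq, hpM, hqN]

theorem reflect_pow_eq_self {N : ℕ} {p : R[X]} (hp : p.natDegree ≤ N)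
    (hpN : reflect N p = p) (m : ℕ) : reflect (m * N) (p ^ m) = p ^ m := by
  induction m with
  | zero => simp
  | succ m ih =>
    rw [pow_succ, Nat.succ_mul]
    exact reflect_mul_eq_self (natDegree_pow_le_of_le m hp) hp ih hpN

end Reflect

end Polynomial

theorem coeff_geomPoly (n j : ℕ) : (geomPoly n).coeff j = if j < n then 1 else 0 := by
  simp [geomPoly, finsetSum_coeff, coeff_X_pow]

theorem natDegree_geomPoly_le (n : ℕ) : (geomPoly n).natDegree ≤ n - 1 := by
  rw [natDegree_le_iff_coeff_eq_zero]
  intro j hj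
  rw [coeff_geomPoly, if_neg (by omega)]

theorem reflect_geomPoly (n : ℕ) : reflect (n - 1) (geomPoly n) = geomPoly n := by
  rw [reflect_eq_self_iff]
  intro i hi
  rw [coeff_geomPoly, coeff_geomPoly]
  exact if_congr (by omega) rfl rfl

section Eop

variable {n : ℕ}

theorem coeff_Eop (hn : 0 < n) (p : ℤ[X]) (i : ℕ) : (Eop n p).coeff i = p.coeff (n * i) := by
  simp only [Eop, finsetSum_coeff, coeff_C_mul, coeff_X_pow, mul_ite, mul_one, mul_zero,
    Finset.sum_ite_eq, Finset.mem_range]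
  split_ifs with hi
  · rfl
  · exact (coeff_eq_zero_of_natDegree_lt ((by omega : p.natDegree < i).trans_le
      (Nat.le_mul_of_pos_left i hn))).symm

theorem natDegree_Eop_le (hn : 0 < n) {m : ℕ} {p : ℤ[X]} (hp : p.natDegree ≤ n * m) :
    (Eop n p).natDegree ≤ m := by
  rw [natDegree_le_iff_coeff_eq_zero]
  intro i hi
  rw [coeff_Eop hn]
  exact coeff_eq_zero_of_natDegree_lt (hp.trans_lt (Nat.mul_lt_mul_left hn |>.mpr hi))

theorem reflect_Eop (hn : 0 < n) {m : ℕ} {p : ℤ[X]} (hp : reflect (n * m) p = p) :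
    reflect m (Eop n p) = Eop n p := by
  rw [reflect_eq_self_iff] at hp ⊢
  intro i hi
  rw [coeff_Eop hn, coeff_Eop hn, hp (n * i) (Nat.mul_le_mul_left n hi), Nat.mul_sub]

end Eop

theorem stmt15_general (d n : ℕ) (hn : 0 < n)
    (b : Polynomial ℤ) (hbdeg : b.natDegree ≤ d + 1)
    (hbsym : ∀ i ≤ d + 1, b.coeff i = b.coeff (d + 1 - i)) :
    (Eop n (b * geomPoly n ^ (d + 1))).natDegree ≤ d + 1 ∧
    ∀ i ≤ d + 1,
      (Eop n (b * geomPoly n ^ (d + 1))).coeff i =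
        (Eop n (b * geomPoly n ^ (d + 1))).coeff (d + 1 - i) := by
  have hdeg : (d + 1) + (d + 1) * (n - 1) = n * (d + 1) := by
    rw [Nat.add_comm, ← Nat.mul_add_one, Nat.sub_add_cancel hn, Nat.mul_comm]
  have hgdeg : (geomPoly n ^ (d + 1)).natDegree ≤ (d + 1) * (n - 1) :=
    natDegree_pow_le_of_le _ (natDegree_geomPoly_le n)
  have hpdeg : (b * geomPoly n ^ (d + 1)).natDegree ≤ n * (d + 1) :=
    hdeg ▸ natDegree_mul_le_of_le hbdeg hgdeg
  have hpsym : reflect (n * (d + 1)) (b * geomPoly n ^ (d + 1)) = b * geomPoly n ^ (d + 1) :=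
    hdeg ▸ reflect_mul_eq_self hbdeg hgdeg (reflect_eq_self_iff.mpr hbsym)
      (reflect_pow_eq_self (natDegree_geomPoly_le n) (reflect_geomPoly n) (d + 1))
  exact ⟨natDegree_Eop_le hn hpdeg, reflect_eq_self_iff.mp (reflect_Eop hn hpsym)⟩

theorem stmt15 (d n : ℕ) (hd : 0 < d) (hn : 0 < n)
    (b : Polynomial ℤ) (hbdeg : b.natDegree ≤ d + 1)
    (hbsym : ∀ i ≤ d + 1, b.coeff i = b.coeff (d + 1 - i)) :
    (Eop n (b * geomPoly n ^ (d + 1))).natDegree ≤ d + 1 ∧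
    ∀ i ≤ d + 1,
      (Eop n (b * geomPoly n ^ (d + 1))).coeff i =
        (Eop n (b * geomPoly n ^ (d + 1))).coeff (d + 1 - i) :=
  stmt15_general d n hn b hbdeg hbsym
end

section
/- Fix a positive integer d and set n_d = d if d is even and n_d = (d+1)/2 if d is odd. Let h(t) = h_0 + h_1 t + ⋯ + h_d t^d be a polynomial of degree at most d with integer coefficients and h_0 = 1 satisfying h_0 + h_1 + ⋯ + h_{i+1} > h_d + h_{d−1} + ⋯ + h_{d−i} for all 0 ≤ i ≤ ⌊d/2⌋ − 1. Then for every integer n ≥ n_d, the coefficients of U_n h(t) satisfy h_{i+1}(n) > h_{d−i}(n) for all 0 ≤ i ≤ ⌊d/2⌋ − 1. -/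
/-!
Put `P(t) = (1 + t + ⋯ + t^(n-1))^(d+1)` and `B(N) = [t^N] P`. Since
`(1 - tⁿ)^(d+1) = (1 - t)^(d+1) P(t)`, the `k`-th coefficient of `U_n h` is the `nk`-th
coefficient of `h P`, i.e. `h_k(n) = ∑_j h_j B(nk - j)`. The coefficients `B` are symmetric about
`(d+1)(n-1)/2` and unimodal, strictly below the middle. Pairing `j` with `d + 1 - j` gives
`h_{i+1}(n) - h_{d-i}(n) = ∑_{j ≤ ⌊d/2⌋} (h_j - h_{d+1-j}) A_j` with
`A_j = B(n(i+1) - j) - B(n(i+1) - (d+1-j))`. For `n ≥ n_d` the weights `A_j` are nonincreasing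
and nonnegative with `A_0 > 0`, and the hypothesis on `h` says exactly that the partial sums
`∑_{j<t} (h_j - h_{d+1-j})` are positive, so Abel summation bounds the difference below by `A_0`.
-/

open Polynomial

/-- `ehrG d p m = ∑_{i=0}^{d} p_i * C(m+d-i, d)`, the value at `m` of the polynomial `g`
associated to `p` by `p(t)/(1-t)^(d+1) = ∑_{m ≥ 0} g(m) tᵐ`. -/
def ehrG (d : ℕ) (p : Polynomial ℤ) (m : ℕ) : ℤ :=
  ∑ i ∈ Finset.range (d + 1), p.coeff i * ((m + d - i).choose d : ℤ)

open Finset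
open scoped PowerSeries

section
variable {R : Type*} [CommRing R] [LinearOrder R] [IsStrictOrderedRing R]

lemma sum_range_succ_mul_eq_of_antisymm (c A : ℕ → R) (N : ℕ)
    (hA : ∀ j ≤ N, A (N - j) = -A j) :
    ∑ j ∈ range (N + 1), c j * A j
      = ∑ j ∈ range ((N + 1) / 2), (c j - c (N - j)) * A j := by
  have hrefl : ∀ s k, s + k = N + 1 → 2 * k ≤ N + 1 →
      ∑ x ∈ range k, c (s + x) * A (s + x) = -∑ x ∈ range k, c (N - x) * A x := by
    intro s k hs hk
    rw [← sum_range_reflect, ← sum_neg_distrib]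
    refine sum_congr rfl fun x hx => ?_
    have hx := mem_range.1 hx
    rw [show s + (k - 1 - x) = N - x by omega, hA x (by omega), mul_neg]
  obtain ⟨k, rfl | rfl⟩ := Nat.even_or_odd' N
  · have hmid : A k = 0 := by
      have := hA k (by omega)
      rw [show 2 * k - k = k by omega] at this
      linarith
    rw [show 2 * k + 1 = k + 1 + k by ring, sum_range_add, sum_range_succ, hmid, mul_zero,
      add_zero, hrefl (k + 1) k (by omega) (by omega), show (k + 1 + k) / 2 = k by omega]
    simp only [← sub_eq_add_neg, ← sum_sub_distrib, sub_mul]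
  · rw [show 2 * k + 1 + 1 = k + 1 + (k + 1) by ring, sum_range_add,
      hrefl (k + 1) (k + 1) (by omega) (by omega), show (k + 1 + (k + 1)) / 2 = k + 1 by omega]
    simp only [← sub_eq_add_neg, ← sum_sub_distrib, sub_mul]

lemma mul_le_sum_mul_of_antitone {a g : ℕ → R} {m : R} {M : ℕ}
    (ha : ∀ j, j + 1 < M → a (j + 1) ≤ a j) (haM : 0 ≤ a (M - 1))
    (hg : ∀ t, 0 < t → t ≤ M → m ≤ ∑ j ∈ range t, g j) (hM : 0 < M) :
    m * a 0 ≤ ∑ j ∈ range M, g j * a j := by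
  have hparts := sum_range_by_parts a g M
  simp only [smul_eq_mul] at hparts
  calc m * a 0 = a (M - 1) * m - ∑ i ∈ range (M - 1), (a (i + 1) - a i) * m := by
        rw [← sum_mul, sum_range_sub]; ring
    _ ≤ a (M - 1) * ∑ j ∈ range M, g j
          - ∑ i ∈ range (M - 1), (a (i + 1) - a i) * ∑ j ∈ range (i + 1), g j := by
        refine sub_le_sub (mul_le_mul_of_nonneg_left (hg M hM le_rfl) haM)
          (sum_le_sum fun i hi => ?_)
        have hi := mem_range.1 hi
        exact mul_le_mul_of_nonpos_left (hg (i + 1) (by omega) (by omega))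
          (sub_nonpos.2 (ha i (by omega)))
    _ = ∑ j ∈ range M, g j * a j := by rw [← hparts]; simp only [mul_comm]


lemma le_of_symm_of_le_add_one {α : Type*} [Preorder α] {f : ℤ → α} {D : ℤ}
    (hsymm : ∀ z, f (D - z) = f z) (hstep : ∀ z, 2 * z + 1 ≤ D → f z ≤ f (z + 1)) :
    ∀ x y, x ≤ y → x + y ≤ D → f x ≤ f y := by
  suffices ∀ k : ℕ, ∀ x, x + (x + k) ≤ D → f x ≤ f (x + k) by
    intro x y hxy hD
    have := this (y - x).toNat x (by omega)
    rwa [show x + (y - x).toNat = y by omega] at this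
  intro k
  induction k with
  | zero => simp
  | succ k ih =>
    intro x hD
    rcases eq_or_lt_of_le hD with hD | hD
    · rw [← hsymm (x + _), ← hD]; ring_nf; rfl
    · calc f x ≤ f (x + 1) := hstep x (by omega)
        _ ≤ f (x + 1 + k) := ih (x + 1) (by omega)
        _ = f (x + ↑(k + 1)) := by push_cast; ring_nf

end

def cubeSlice (n : ℕ) : ℕ → ℤ → ℤ
  | 0, N => if N = 0 then 1 else 0
  | d + 1, N => ∑ c ∈ range n, cubeSlice n d (N - c)

namespace cubeSlice

variable {n : ℕ}

lemma zero (N : ℤ) : cubeSlice n 0 N = if N = 0 then 1 else 0 := rfl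

lemma succ (d : ℕ) (N : ℤ) :
    cubeSlice n (d + 1) N = ∑ c ∈ range n, cubeSlice n d (N - c) := rfl

lemma nonneg (d : ℕ) (N : ℤ) : 0 ≤ cubeSlice n d N := by
  induction d generalizing N with
  | zero => rw [zero]; split_ifs <;> norm_num
  | succ d ih => exact sum_nonneg fun c _ => ih _

lemma eq_zero_of_neg (d : ℕ) {N : ℤ} (hN : N < 0) : cubeSlice n d N = 0 := by
  induction d generalizing N with
  | zero => simp [zero, hN.ne]
  | succ d ih => exact sum_eq_zero fun c _ => ih (by omega)

lemma symm (d : ℕ) (N : ℤ) : cubeSlice n d (d * (n - 1) - N) = cubeSlice n d N := by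
  induction d generalizing N with
  | zero => simp [zero, neg_eq_zero]
  | succ d ih =>
    rw [succ, succ, ← sum_range_reflect]
    refine sum_congr rfl fun c hc => ?_
    have hc : c < n := mem_range.mp hc
    rw [← ih]
    congr 1
    push_cast [Nat.cast_sub (by omega : c ≤ n - 1), Nat.cast_sub (by omega : 1 ≤ n)]
    ring

lemma pos (hn : 1 ≤ n) (d : ℕ) {N : ℤ} (h0 : 0 ≤ N) (hN : N ≤ d * (n - 1)) :
    0 < cubeSlice n d N := by
  induction d generalizing N with
  | zero => simp [zero, le_antisymm (by simpa using hN) h0]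
  | succ d ih =>
    -- the last coordinate `c = max 0 (N - d (n - 1))` leaves a reachable sum for the others
    set c : ℤ := max 0 (N - d * (n - 1))
    have hdn : 0 ≤ (d : ℤ) * (n - 1) := mul_nonneg (by positivity) (by omega)
    have hD : ((d + 1 : ℕ) : ℤ) * (n - 1) = d * (n - 1) + (n - 1) := by push_cast; ring
    have hc : c.toNat ∈ range n := by
      rw [mem_range]; omega
    refine lt_of_lt_of_le (ih (N := N - c.toNat) (by omega) (by omega)) ?_
    exact single_le_sum (fun c _ => nonneg d _) hc

lemma succ_add_one_sub (d : ℕ) (z : ℤ) :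
    cubeSlice n (d + 1) (z + 1) - cubeSlice n (d + 1) z
      = cubeSlice n d (z + 1) - cubeSlice n d (z + 1 - n) := by
  rw [succ, succ, ← sum_sub_distrib]
  have : ∀ c : ℕ, cubeSlice n d (z - c) = cubeSlice n d (z + 1 - ↑(c + 1)) := fun c => by
    push_cast; ring_nf
  simp_rw [this, sum_range_sub']
  simp


lemma le_of_le (d : ℕ) {x y : ℤ} (hxy : x ≤ y) (hD : x + y ≤ d * (n - 1)) :
    cubeSlice n d x ≤ cubeSlice n d y := by
  induction d generalizing x y with
  | zero =>
    simp only [zero]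
    split_ifs <;> first | rfl | omega
  | succ d ih =>
    refine le_of_symm_of_le_add_one (symm (d + 1)) (fun z hz => ?_) x y hxy hD
    have := succ_add_one_sub (n := n) d z
    have := ih (x := z + 1 - n) (y := z + 1) (by omega) (by push_cast at hz; linarith)
    omega

lemma lt_add_one (hn : 2 ≤ n) {d : ℕ} (hd : 2 ≤ d) {z : ℤ} (hz : 0 ≤ z)
    (hD : 2 * z + 2 ≤ d * (n - 1)) :
    cubeSlice n d z < cubeSlice n d (z + 1) := by
  induction d generalizing z with
  | zero => omega
  | succ d ih =>
    have hstep := succ_add_one_sub (n := n) d z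
    have hdn : (d : ℤ) * (n - 1) + (n - 1) = (d + 1 : ℕ) * (n - 1) := by push_cast; ring
    suffices cubeSlice n d (z + 1 - n) < cubeSlice n d (z + 1) by omega
    rcases lt_or_ge (z + 1 - n) 0 with hneg | hpos
    · rw [eq_zero_of_neg d hneg]
      exact pos (by omega) d (by omega) (by nlinarith)
    · have hd' : 2 ≤ d := by
        by_contra hd'
        have : d = 1 := by omega
        subst this; push_cast at hD; linarith
      calc cubeSlice n d (z + 1 - n) < cubeSlice n d (z + 1 - n + 1) :=
            ih hd' hpos (by push_cast at hD; nlinarith)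
        _ ≤ cubeSlice n d (z + 1) := le_of_le d (by omega) (by push_cast at hD; nlinarith)

lemma lt_of_lt (hn : 2 ≤ n) {d : ℕ} (hd : 2 ≤ d) {x y : ℤ} (hx : 0 ≤ x) (hxy : x < y)
    (hD : x + y < d * (n - 1)) : cubeSlice n d x < cubeSlice n d y :=
  (lt_add_one hn hd hx (by omega)).trans_le (le_of_le d (by omega) (by omega))

end cubeSlice

lemma coeff_geom_sum_pow (n d N : ℕ) :
    ((∑ c ∈ range n, X ^ c : ℤ[X]) ^ d).coeff N = cubeSlice n d N := by
  induction d generalizing N with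
  | zero => simp [cubeSlice.zero, coeff_one]
  | succ d ih =>
    rw [pow_succ, mul_sum, finsetSum_coeff, cubeSlice.succ]
    refine sum_congr rfl fun c _ => ?_
    rw [coeff_mul_X_pow']
    split_ifs with hc
    · rw [ih, Nat.cast_sub hc]
    · rw [cubeSlice.eq_zero_of_neg d (by omega)]

lemma coeff_mul_geom_sum_pow {d : ℕ} {h : ℤ[X]} (hdeg : h.natDegree ≤ d) (n e N : ℕ) :
    (h * (∑ c ∈ range n, X ^ c) ^ e).coeff N
      = ∑ j ∈ range (d + 1), h.coeff j * cubeSlice n e (N - j) := by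
  conv_lhs => rw [as_sum_range' h (d + 1) (by omega)]
  rw [sum_mul, finsetSum_coeff]
  refine sum_congr rfl fun j _ => ?_
  rw [← C_mul_X_pow_eq_monomial, mul_assoc, coeff_C_mul, coeff_X_pow_mul']
  split_ifs with hj
  · rw [coeff_geom_sum_pow, Nat.cast_sub hj]
  · rw [cubeSlice.eq_zero_of_neg e (by omega), mul_zero]

/-- The operator `U_n`, acting on power series. -/
noncomputable def veronese {R : Type*} [Semiring R] (n : ℕ) (F : R⟦X⟧) : R⟦X⟧ :=
  PowerSeries.mk fun m => PowerSeries.coeff (n * m) F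

lemma veronese_expand_mul {R : Type*} [CommSemiring R] {n : ℕ} (hn : 0 < n) (A : R[X])
    (F : R⟦X⟧) :
    veronese n ((expand R n A : R⟦X⟧) * F) = (A : R⟦X⟧) * veronese n F := by
  induction A using Polynomial.induction_on' with
  | add p q hp hq =>
    ext m
    have hp := congrArg (PowerSeries.coeff m) hp
    have hq := congrArg (PowerSeries.coeff m) hq
    simp only [veronese, PowerSeries.coeff_mk] at hp hq ⊢
    simp [add_mul, hp, hq]
  | monomial k a =>
    rw [← C_mul_X_pow_eq_monomial, map_mul, expand_C, map_pow, expand_X, ← pow_mul]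
    ext m
    simp only [veronese, Polynomial.coe_mul, coe_C, Polynomial.coe_pow, coe_X, mul_assoc,
      PowerSeries.coeff_C_mul, PowerSeries.coeff_X_pow_mul', PowerSeries.coeff_mk,
      Nat.mul_le_mul_left_iff hn, ← Nat.mul_sub]

lemma ehrG_eq_coeff_mul_invOneSubPow {d : ℕ} {p : ℤ[X]} (hp : p.natDegree ≤ d) (m : ℕ) :
    ehrG d p m
      = PowerSeries.coeff m ((p : ℤ⟦X⟧) * (PowerSeries.invOneSubPow ℤ (d + 1)).val) := by
  rw [ehrG, PowerSeries.invOneSubPow_val_succ_eq_mk_add_choose, PowerSeries.coeff_mul,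
    Nat.sum_antidiagonal_eq_sum_range_succ_mk]
  simp only [coeff_coe, PowerSeries.coeff_mk]
  have h1 : ∑ i ∈ range (d + 1), p.coeff i * ((m + d - i).choose d : ℤ)
      = ∑ i ∈ range (m + d + 1), p.coeff i * ((m + d - i).choose d : ℤ) := by
    refine sum_subset (by intro i; simp only [mem_range]; omega) fun i _ hi => ?_
    rw [coeff_eq_zero_of_natDegree_lt (by rw [mem_range, not_lt] at hi; omega), zero_mul]
  have h2 : ∑ i ∈ range (m + 1), p.coeff i * ((d + (m - i)).choose d : ℤ)
      = ∑ i ∈ range (m + d + 1), p.coeff i * ((m + d - i).choose d : ℤ) := by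
    rw [sum_congr rfl fun i hi => by rw [show d + (m - i) = m + d - i by rw [mem_range] at hi; omega]]
    refine sum_subset (by intro i; simp only [mem_range]; omega) fun i hi hi' => ?_
    rw [Nat.choose_eq_zero_of_lt (by simp only [mem_range, not_lt] at hi hi'; omega)]
    simp
  rw [h1, ← h2]

lemma coeff_eq_coeff_mul_geom_sum_pow {d n : ℕ} (hn : 0 < n) {h Uh : ℤ[X]}
    (hdeg : h.natDegree ≤ d) (hUdeg : Uh.natDegree ≤ d)
    (hU : ∀ m : ℕ, ehrG d Uh m = ehrG d h (n * m)) (k : ℕ) :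
    Uh.coeff k = (h * (∑ c ∈ range n, X ^ c) ^ (d + 1)).coeff (n * k) := by
  set P : ℤ[X] := (∑ c ∈ range n, X ^ c) ^ (d + 1)
  set G := (PowerSeries.invOneSubPow ℤ (d + 1)).val
  have hG : (((1 - X) ^ (d + 1) : ℤ[X]) : ℤ⟦X⟧) * G = 1 := by
    rw [← (PowerSeries.invOneSubPow ℤ (d + 1)).inv_val,
      PowerSeries.invOneSubPow_inv_eq_one_sub_pow]
    push_cast; rfl
  have hUG : (Uh : ℤ⟦X⟧) * G = veronese n ((h : ℤ⟦X⟧) * G) := by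
    ext m
    rw [veronese, PowerSeries.coeff_mk, ← ehrG_eq_coeff_mul_invOneSubPow hUdeg,
      ← ehrG_eq_coeff_mul_invOneSubPow hdeg, hU]
  have hexpand : expand ℤ n ((1 - X) ^ (d + 1)) = (1 - X) ^ (d + 1) * P := by
    rw [← mul_pow, mul_neg_geom_sum, map_pow, map_sub, map_one, expand_X]
  have hUP : (Uh : ℤ⟦X⟧) = veronese n ((h * P : ℤ[X]) : ℤ⟦X⟧) :=
    calc (Uh : ℤ⟦X⟧) = (((1 - X) ^ (d + 1) : ℤ[X]) : ℤ⟦X⟧) * (Uh * G) := by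
          rw [mul_left_comm, hG, mul_one]
      _ = veronese n (↑(expand ℤ n ((1 - X) ^ (d + 1))) * ((h : ℤ⟦X⟧) * G)) := by
        rw [hUG, veronese_expand_mul hn]
      _ = veronese n ((h * P : ℤ[X]) : ℤ⟦X⟧) := by
        rw [hexpand, Polynomial.coe_mul, Polynomial.coe_mul]
        congr 1
        linear_combination ((h : ℤ⟦X⟧) * (P : ℤ⟦X⟧)) * hG
  rw [← coeff_coe, hUP, veronese, PowerSeries.coeff_mk, coeff_coe]

/-- The weight `A_j` of the pairing argument, at `x = n(i+1)` and `e = d + 1`. -/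
def cubeSliceDiff (n e : ℕ) (x : ℤ) (j : ℕ) : ℤ :=
  cubeSlice n e (x - j) - cubeSlice n e (x - (e - j))

section cubeSliceDiff
variable {n e : ℕ} {x : ℤ}

lemma cubeSliceDiff_sub {j : ℕ} (hj : j ≤ e) :
    cubeSliceDiff n e x (e - j) = -cubeSliceDiff n e x j := by
  rw [cubeSliceDiff, cubeSliceDiff, Nat.cast_sub hj, sub_sub_cancel]
  ring

lemma cubeSliceDiff_succ_le (hx : 2 * x ≤ e * (n - 1) + 1) {j : ℕ} (hj : j + 1 ≤ e) :
    cubeSliceDiff n e x (j + 1) ≤ cubeSliceDiff n e x j := by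
  have h1 := cubeSlice.le_of_le (n := n) e (x := x - (j + 1)) (y := x - j) (by omega) (by omega)
  have h2 := cubeSlice.le_of_le (n := n) e (x := x - (e - j)) (y := x - (e - (j + 1)))
    (by omega) (by omega)
  rw [cubeSliceDiff, cubeSliceDiff]
  push_cast
  linarith

lemma cubeSliceDiff_nonneg (hx : 2 * x ≤ e * (n - 1) + 1) (he : 0 < e) {j : ℕ}
    (hj : 2 * j ≤ e) :
    0 ≤ cubeSliceDiff n e x j :=
  sub_nonneg.2 (cubeSlice.le_of_le e (by omega) (by omega))

lemma cubeSliceDiff_zero_pos (hn : 2 ≤ n) (he : 2 ≤ e) (hx0 : 0 ≤ x)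
    (hx : 2 * x ≤ e * (n - 1) + 1) : 0 < cubeSliceDiff n e x 0 := by
  have hD : (2 : ℤ) ≤ e * (n - 1) := by
    have : (2 : ℤ) ≤ e := by exact_mod_cast he
    have : (1 : ℤ) ≤ n - 1 := by omega
    nlinarith
  rw [cubeSliceDiff, Nat.cast_zero, sub_zero, sub_zero, sub_pos]
  rcases lt_or_ge (x - e) 0 with hneg | hnonneg
  · rw [cubeSlice.eq_zero_of_neg e hneg]
    exact cubeSlice.pos (by omega) e hx0 (by omega)
  · exact cubeSlice.lt_of_lt hn he hnonneg (by omega) (by omega)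

end cubeSliceDiff

lemma coeff_mul_geom_sum_pow_sub {e : ℕ} {h : ℤ[X]} (hdeg : h.natDegree ≤ e) (n : ℕ)
    {K : ℕ} (hK : K ≤ e) :
    (h * (∑ c ∈ range n, X ^ c) ^ e).coeff (n * K)
        - (h * (∑ c ∈ range n, X ^ c) ^ e).coeff (n * (e - K))
      = ∑ j ∈ range ((e + 1) / 2),
          (h.coeff j - h.coeff (e - j)) * cubeSliceDiff n e ↑(n * K) j := by
  rw [coeff_mul_geom_sum_pow hdeg, coeff_mul_geom_sum_pow hdeg, ← sum_sub_distrib,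
    ← sum_range_succ_mul_eq_of_antisymm _ _ e fun j hj => cubeSliceDiff_sub hj]
  refine sum_congr rfl fun j _ => ?_
  rw [cubeSliceDiff, mul_sub, ← cubeSlice.symm e (↑(n * (e - K)) - j)]
  congr 3
  push_cast [Nat.cast_sub hK]
  ring

lemma one_le_sum_range_coeff_sub {d : ℕ} {h : ℤ[X]} (hdeg : h.natDegree ≤ d)
    (h0 : h.coeff 0 = 1)
    (hineq : ∀ i : ℕ, i + 1 ≤ d / 2 →
      ∑ j ∈ Icc (d - i) d, h.coeff j < ∑ j ∈ range (i + 2), h.coeff j)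
    {t : ℕ} (ht0 : 0 < t) (ht : t ≤ d / 2 + 1) :
    1 ≤ ∑ j ∈ range t, (h.coeff j - h.coeff (d + 1 - j)) := by
  have hreflect :
      ∑ j ∈ range t, h.coeff (d + 1 - j) = ∑ j ∈ Icc (d + 2 - t) d, h.coeff j := by
    rw [range_eq_Ico, sum_Ico_reflect _ _ (by omega), show d + 1 + 1 - t = d + 2 - t by omega,
      Nat.sub_zero, ← Ico_add_one_right_eq_Icc, sum_Ico_succ_top (by omega),
      coeff_eq_zero_of_natDegree_lt (by omega), add_zero]
  rw [sum_sub_distrib, hreflect]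
  obtain rfl | ⟨i, rfl⟩ : t = 1 ∨ ∃ i, t = i + 2 := by
    by_cases ht1 : t = 1
    · exact Or.inl ht1
    · exact Or.inr ⟨t - 2, by omega⟩
  · simp [h0]
  · have := hineq i (by omega)
    rw [show d + 2 - (i + 2) = d - i by omega]
    omega

lemma two_mul_mul_add_le {d n K : ℕ} (hn : (if d % 2 = 0 then d else (d + 1) / 2) ≤ n)
    (hK : 2 * K ≤ d) : 2 * (n * K) + d ≤ (d + 1) * n := by
  split_ifs at hn with hd
  · nlinarith
  · have h2K : n * (2 * K + 1) ≤ n * d := Nat.mul_le_mul_left n (by omega)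
    have : d + 1 ≤ 2 * n := by omega
    nlinarith

theorem stmt19_general (d : ℕ)
    (h : Polynomial ℤ) (hdeg : h.natDegree ≤ d) (h0 : h.coeff 0 = 1)
    -- h_0 + ⋯ + h_{i+1} > h_d + ⋯ + h_{d-i} for 0 ≤ i ≤ ⌊d/2⌋ - 1
    (hineq : ∀ i : ℕ, i + 1 ≤ d / 2 →
      ∑ j ∈ Finset.Icc (d - i) d, h.coeff j < ∑ j ∈ Finset.range (i + 2), h.coeff j)
    -- n ≥ n_d, where n_d = d if d is even and n_d = (d+1)/2 if d is odd
    (n : ℕ) (hn : (if d % 2 = 0 then d else (d + 1) / 2) ≤ n)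
    (Uh : Polynomial ℤ) (hUdeg : Uh.natDegree ≤ d)
    (hU : ∀ m : ℕ, ehrG d Uh m = ehrG d h (n * m)) :
    ∀ i : ℕ, i + 1 ≤ d / 2 → Uh.coeff (d - i) < Uh.coeff (i + 1) := by
  intro i hi
  have hn2 : 2 ≤ n := by split_ifs at hn <;> omega
  have hx : 2 * ((n * (i + 1) : ℕ) : ℤ) ≤ ((d + 1 : ℕ) : ℤ) * (n - 1) + 1 := by
    have := two_mul_mul_add_le hn (K := i + 1) (by omega)
    push_cast
    linarith
  have hcoeff := coeff_eq_coeff_mul_geom_sum_pow (by omega) hdeg hUdeg hU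
  have hdiff := coeff_mul_geom_sum_pow_sub (hdeg.trans d.le_succ) n (K := i + 1) (by omega)
  rw [← hcoeff, show d + 1 - (i + 1) = d - i by omega, ← hcoeff,
    show (d + 1 + 1) / 2 = d / 2 + 1 by omega] at hdiff
  have habel := mul_le_sum_mul_of_antitone (m := 1) (M := d / 2 + 1)
    (fun j hj => cubeSliceDiff_succ_le hx (by omega))
    (cubeSliceDiff_nonneg hx (by omega) (by omega))
    (fun t ht0 ht => one_le_sum_range_coeff_sub hdeg h0 hineq ht0 ht) (by omega)
  have hpos := cubeSliceDiff_zero_pos hn2 (by omega) (by positivity) hx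
  linarith

theorem stmt19 (d : ℕ) (hd : 0 < d)
    (h : Polynomial ℤ) (hdeg : h.natDegree ≤ d) (h0 : h.coeff 0 = 1)
    -- h_0 + ⋯ + h_{i+1} > h_d + ⋯ + h_{d-i} for 0 ≤ i ≤ ⌊d/2⌋ - 1
    (hineq : ∀ i : ℕ, i + 1 ≤ d / 2 →
      ∑ j ∈ Finset.Icc (d - i) d, h.coeff j < ∑ j ∈ Finset.range (i + 2), h.coeff j)
    -- n ≥ n_d, where n_d = d if d is even and n_d = (d+1)/2 if d is odd
    (n : ℕ) (hn : (if d % 2 = 0 then d else (d + 1) / 2) ≤ n)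
    (Uh : Polynomial ℤ) (hUdeg : Uh.natDegree ≤ d)
    (hU : ∀ m : ℕ, ehrG d Uh m = ehrG d h (n * m)) :
    ∀ i : ℕ, i + 1 ≤ d / 2 → Uh.coeff (d - i) < Uh.coeff (i + 1) :=
  stmt19_general d h hdeg h0 hineq n hn Uh hUdeg hU
end
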